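/- Consider the octahedron spin system of N = 6 spins with coupling constant J > 0: label the spins 1,…,6 so that the antipodal (non-adjacent) pairs are {1,6}, {2,5}, {3,4}, and every other pair of distinct spins is adjacent; the energy is H₀(s) = J ∑ ⟨s_μ, s_ν⟩, summed over all ordered pairs (μ,ν) of distinct adjacent spins. Then for every S with 0 ≤ S ≤ 6, the minimal energy among states with total spin length S equals J(S² − 12): every state s with ‖∑_μ s_μ‖ = S satisfies H₀(s) ≥ J(S² − 12), and there is such a state attaining this value. -/

import Mathlib

open scoped RealInnerProductSpace

/-- Two vertices of the octahedron (labelled by `Fin 6`) are adjacent iff they are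
distinct and not antipodal, the antipodal pairs being `{0,5}, {1,4}, {2,3}`
(i.e. `{1,6}, {2,5}, {3,4}` in 1-based labelling). -/
def octaAdj (μ ν : Fin 6) : Prop := μ ≠ ν ∧ (μ : ℕ) + (ν : ℕ) ≠ 5

instance : DecidableRel octaAdj := fun _ _ => instDecidableAnd

/-- The energy of the octahedron spin system with coupling `J`:
`J` times the sum of `⟨s_μ, s_ν⟩` over all ordered adjacent pairs. -/
noncomputable def octaEnergy (J : ℝ) (s : Fin 6 → EuclideanSpace ℝ (Fin 3)) : ℝ :=
  J * ∑ μ, ∑ ν, if octaAdj μ ν then ⟪s μ, s ν⟫ else 0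

/-! Splitting the sum over adjacent pairs as all pairs minus the diagonal and the antipodal pairs
gives, for unit spins, `H₀(s) = J (‖∑ μ, s μ‖² - 6 - ∑ μ, ⟪s μ, s μ.rev⟫)`, where `μ.rev = 5 - μ`
is the antipode of `μ`. Each antipodal term is at most `1`, which is the lower bound, with
equality when antipodal spins coincide; such states `(a, b, c, c, b, a)` have total spin
`2 ‖a + b + c‖`, and three coplanar unit vectors reach every `‖a + b + c‖ ∈ [0, 3]`. -/

section UnitVectors

variable {E : Type*} [NormedAddCommGroup E] [InnerProductSpace ℝ E]

theorem norm_sum_sq_eq_sum_inner {ι : Type*} (s : Finset ι) (v : ι → E) :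
    ‖∑ i ∈ s, v i‖ ^ 2 = ∑ i ∈ s, ∑ j ∈ s, ⟪v i, v j⟫ := by
  rw [← real_inner_self_eq_norm_sq, sum_inner]
  simp_rw [inner_sum]

theorem norm_smul_add_smul_sq_of_orthonormal {e f : E} (he : ‖e‖ = 1) (hf : ‖f‖ = 1)
    (hef : ⟪e, f⟫ = 0) (x y : ℝ) : ‖x • e + y • f‖ ^ 2 = x ^ 2 + y ^ 2 := by
  rw [norm_add_sq_real, norm_smul, norm_smul, he, hf, real_inner_smul_left,
    real_inner_smul_right, hef, Real.norm_eq_abs, Real.norm_eq_abs]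
  simp [sq_abs]

theorem exists_unit_vectors_norm_add_add_eq {e f : E} (he : ‖e‖ = 1) (hf : ‖f‖ = 1)
    (hef : ⟪e, f⟫ = 0) {T : ℝ} (hT0 : 0 ≤ T) (hT3 : T ≤ 3) :
    ∃ a b c : E, ‖a‖ = 1 ∧ ‖b‖ = 1 ∧ ‖c‖ = 1 ∧ ‖a + b + c‖ = T := by
  set t := (T - 1) / 2 with ht
  set u := √(1 - t ^ 2)
  have hu : u ^ 2 = 1 - t ^ 2 := Real.sq_sqrt (by rw [ht]; nlinarith)
  have hunit : ∀ y, y ^ 2 = u ^ 2 → ‖t • e + y • f‖ = 1 := fun y hy => by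
    rw [← pow_eq_one_iff_of_nonneg (norm_nonneg _) two_ne_zero,
      norm_smul_add_smul_sq_of_orthonormal he hf hef, hy, hu]
    ring
  refine ⟨t • e + u • f, t • e + (-u) • f, e, hunit u rfl, hunit (-u) (neg_sq u), he, ?_⟩
  have hsum : t • e + u • f + (t • e + (-u) • f) + e = T • e := by
    simp only [neg_smul]
    rw [show T = t + t + 1 by ring, add_smul, add_smul, one_smul]
    abel
  rw [hsum, norm_smul, he, mul_one, Real.norm_of_nonneg hT0]

end UnitVectors

theorem octaAdj_iff (μ ν : Fin 6) : octaAdj μ ν ↔ ν ≠ μ ∧ ν ≠ μ.rev := by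
  revert μ ν; decide

theorem sum_ite_octaAdj (f : Fin 6 → Fin 6 → ℝ) :
    ∑ μ, ∑ ν, (if octaAdj μ ν then f μ ν else 0) = ∑ μ, (∑ ν, f μ ν - f μ μ - f μ μ.rev) := by
  refine Finset.sum_congr rfl fun μ _ => ?_
  have hrev : μ.rev ≠ μ := by revert μ; decide
  have hadj : Finset.univ.filter (octaAdj μ) = (Finset.univ.erase μ).erase μ.rev := by
    ext ν; simp [octaAdj_iff, and_comm]
  rw [Finset.sum_ite, Finset.sum_const_zero, add_zero, hadj,
    Finset.sum_erase_eq_sub (Finset.mem_erase.2 ⟨hrev, Finset.mem_univ _⟩),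
    Finset.sum_erase_eq_sub (Finset.mem_univ _)]

theorem octaEnergy_eq (J : ℝ) (s : Fin 6 → EuclideanSpace ℝ (Fin 3)) :
    octaEnergy J s =
      J * (‖∑ μ, s μ‖ ^ 2 - ∑ μ, ‖s μ‖ ^ 2 - ∑ μ, ⟪s μ, s μ.rev⟫) := by
  rw [octaEnergy, sum_ite_octaAdj, norm_sum_sq_eq_sum_inner]
  simp only [Finset.sum_sub_distrib, real_inner_self_eq_norm_sq]

theorem octaEnergy_eq_of_norm_eq_one {J : ℝ} {s : Fin 6 → EuclideanSpace ℝ (Fin 3)}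
    (hs : ∀ μ, ‖s μ‖ = 1) :
    octaEnergy J s = J * (‖∑ μ, s μ‖ ^ 2 - 6 - ∑ μ, ⟪s μ, s μ.rev⟫) := by
  simp [octaEnergy_eq, hs]

theorem mul_sq_sub_le_octaEnergy {J : ℝ} (hJ : 0 ≤ J) {s : Fin 6 → EuclideanSpace ℝ (Fin 3)}
    (hs : ∀ μ, ‖s μ‖ = 1) : J * (‖∑ μ, s μ‖ ^ 2 - 12) ≤ octaEnergy J s := by
  have hle : ∑ μ, ⟪s μ, s μ.rev⟫ ≤ 6 := by
    calc ∑ μ, ⟪s μ, s μ.rev⟫ ≤ ∑ _μ : Fin 6, (1 : ℝ) := Finset.sum_le_sum fun μ _ =>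
          (real_inner_le_norm _ _).trans_eq (by rw [hs, hs, one_mul])
      _ = 6 := by simp
  rw [octaEnergy_eq_of_norm_eq_one hs]
  exact mul_le_mul_of_nonneg_left (by linarith) hJ

theorem octaEnergy_eq_of_rev_eq {J : ℝ} {s : Fin 6 → EuclideanSpace ℝ (Fin 3)}
    (hs : ∀ μ, ‖s μ‖ = 1) (hrev : ∀ μ, s μ.rev = s μ) :
    octaEnergy J s = J * (‖∑ μ, s μ‖ ^ 2 - 12) := by
  simp only [octaEnergy_eq_of_norm_eq_one hs, hrev, real_inner_self_eq_norm_sq, hs, one_pow,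
    Finset.sum_const, Finset.card_univ, Fintype.card_fin, nsmul_eq_mul, Nat.cast_ofNat]
  ring

theorem exists_rev_invariant_state_norm_sum_eq {S : ℝ} (hS0 : 0 ≤ S) (hS6 : S ≤ 6) :
    ∃ s : Fin 6 → EuclideanSpace ℝ (Fin 3), (∀ μ, ‖s μ‖ = 1) ∧ (∀ μ, s μ.rev = s μ) ∧
      ‖∑ μ, s μ‖ = S := by
  obtain ⟨hnorm, horth⟩ := (EuclideanSpace.basisFun (Fin 3) ℝ).orthonormal
  obtain ⟨a, b, c, ha, hb, hc, habc⟩ := exists_unit_vectors_norm_add_add_eq (hnorm 0) (hnorm 1)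
    (horth (by decide : (0 : Fin 3) ≠ 1)) (T := S / 2) (by linarith) (by linarith)
  refine ⟨![a, b, c, c, b, a], ?_, ?_, ?_⟩
  · intro μ; fin_cases μ <;> simp [ha, hb, hc]
  · intro μ; fin_cases μ <;> rfl
  · have hsum : ∑ μ, ![a, b, c, c, b, a] μ = (2 : ℝ) • (a + b + c) := by
      simp only [Fin.sum_univ_six, Matrix.cons_val_zero, Matrix.cons_val_one, Matrix.cons_val,
        two_smul]
      abel
    rw [hsum, norm_smul, habc, Real.norm_two]
    ring

theorem octahedron_relative_ground_state_energy (J : ℝ) (hJ : 0 < J)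
    (S : ℝ) (hS0 : 0 ≤ S) (hS6 : S ≤ 6) :
    (∀ s : Fin 6 → EuclideanSpace ℝ (Fin 3), (∀ μ, ‖s μ‖ = 1) →
      ‖∑ μ, s μ‖ = S → J * (S ^ 2 - 12) ≤ octaEnergy J s) ∧
    ∃ s : Fin 6 → EuclideanSpace ℝ (Fin 3), (∀ μ, ‖s μ‖ = 1) ∧
      ‖∑ μ, s μ‖ = S ∧ octaEnergy J s = J * (S ^ 2 - 12) := by
  refine ⟨fun s hs hS => hS ▸ mul_sq_sub_le_octaEnergy hJ.le hs, ?_⟩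
  obtain ⟨s, hs, hrev, hS⟩ := exists_rev_invariant_state_norm_sum_eq hS0 hS6
  exact ⟨s, hs, hS, hS ▸ octaEnergy_eq_of_rev_eq hs hrev⟩
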